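/- Let a : ℕ → ℝ be a function supported on primes p ≤ X with |a(p)| ≤ A for all p, and let V(t) = Σ_{p ≤ X} a(p) p^{−1/2} p^{it}. Then for any real T, H > 0 and nonnegative integers ν ≠ μ, the off-diagonal bound holds: |∫_T^{T+H} V(t)^ν · conj(V(t))^μ dt| ≤ 4·A^{ν+μ}·(S^ν C^μ + S^μ C^ν), where S = Σ_{p ≤ X} p^{1/2} and C = Σ_{p ≤ X} p^{−1/2}. -/

import Mathlib

/-!
Expanding the powers writes `V(t)^ν conj(V(t))^μ` as a sum over tuples of primes
`g ∈ P^ν`, `h ∈ P^μ` of coefficients of size at most `A^(ν+μ) / √(∏ g ∏ h)` times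
`exp (i t (log ∏ g - log ∏ h))`. Since `ν ≠ μ`, counting prime factors with multiplicity
shows `∏ g ≠ ∏ h`, so the frequency is at least `1 / (2 ∏ g)` in absolute value and each
integral is at most `4 ∏ g`. The sum of the resulting bounds `4 ∏ (A √(g i)) ∏ (A / √(h j))`
factors as `4 A^(ν+μ) S^ν C^μ`.
-/

open Complex Finset
open scoped ComplexConjugate

lemma norm_integral_cexp_I_mul_le {θ : ℝ} (hθ : θ ≠ 0) (a b : ℝ) :
    ‖∫ t in a..b, cexp (I * t * θ)‖ ≤ 2 / |θ| := by
  have hc : I * (θ : ℂ) ≠ 0 := mul_ne_zero I_ne_zero (ofReal_ne_zero.mpr hθ)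
  have hunit (x : ℝ) : ‖cexp (I * θ * x)‖ = 1 := by
    rw [mul_assoc, ← ofReal_mul]; exact norm_exp_I_mul_ofReal _
  simp_rw [mul_right_comm I]
  rw [integral_exp_mul_complex hc, norm_div, norm_mul, norm_I, one_mul, norm_real,
    Real.norm_eq_abs]
  gcongr
  calc _ ≤ ‖cexp (I * θ * b)‖ + ‖cexp (I * θ * a)‖ := norm_sub_le _ _
    _ = 2 := by rw [hunit, hunit]; norm_num

lemma norm_integral_sum_cexp_le {ι : Type*} (s : Finset ι) (c : ι → ℂ) (θ D : ι → ℝ)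
    (hθ : ∀ k ∈ s, 1 ≤ D k * |θ k|) (a b : ℝ) :
    ‖∫ t in a..b, ∑ k ∈ s, c k * cexp (I * t * θ k)‖ ≤ ∑ k ∈ s, ‖c k‖ * (2 * D k) := by
  have hint : ∀ k ∈ s,
      IntervalIntegrable (fun t : ℝ => c k * cexp (I * t * θ k)) MeasureTheory.volume a b :=
    fun k _ => (by fun_prop : Continuous _).intervalIntegrable a b
  rw [intervalIntegral.integral_finsetSum hint]
  refine (norm_sum_le _ _).trans (sum_le_sum fun k hk => ?_)
  have hθ0 : 0 < |θ k| := (abs_nonneg _).lt_of_ne fun h => by linarith [h ▸ hθ k hk]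
  rw [intervalIntegral.integral_const_mul, norm_mul]
  gcongr
  calc _ ≤ 2 / |θ k| := norm_integral_cexp_I_mul_le (abs_pos.mp hθ0) a b
    _ ≤ 2 * D k := by rw [div_le_iff₀ hθ0]; linarith [hθ k hk]

lemma sum_cexp_pow {ι : Type*} (s : Finset ι) (b : ι → ℂ) (l : ι → ℝ) (t : ℝ) (n : ℕ) :
    (∑ p ∈ s, b p * cexp (I * t * l p)) ^ n =
      ∑ g ∈ Fintype.piFinset fun _ : Fin n => s,
        (∏ i, b (g i)) * cexp (I * t * (∑ i, l (g i) : ℝ)) := by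
  rw [sum_pow']
  refine sum_congr rfl fun g _ => ?_
  rw [prod_mul_distrib, ← exp_sum]
  push_cast
  rw [mul_sum]

lemma conj_sum_cexp {ι : Type*} (s : Finset ι) (b : ι → ℂ) (l : ι → ℝ) (t : ℝ) :
    conj (∑ p ∈ s, b p * cexp (I * t * l p)) =
      ∑ p ∈ s, conj (b p) * cexp (I * t * (-l p : ℝ)) := by
  rw [map_sum]
  refine sum_congr rfl fun p _ => ?_
  rw [map_mul, ← exp_conj]
  simp [conj_ofReal]

lemma pow_mul_conj_pow_sum_cexp {ι : Type*} (s : Finset ι) (b : ι → ℂ) (l : ι → ℝ) (t : ℝ)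
    (n m : ℕ) :
    (∑ p ∈ s, b p * cexp (I * t * l p)) ^ n * conj (∑ p ∈ s, b p * cexp (I * t * l p)) ^ m =
      ∑ gh ∈ (Fintype.piFinset fun _ : Fin n => s) ×ˢ (Fintype.piFinset fun _ : Fin m => s),
        ((∏ i, b (gh.1 i)) * ∏ j, conj (b (gh.2 j))) *
          cexp (I * t * (∑ i, l (gh.1 i) - ∑ j, l (gh.2 j) : ℝ)) := by
  rw [conj_sum_cexp, sum_cexp_pow, sum_cexp_pow, sum_mul_sum, sum_product]
  refine sum_congr rfl fun g _ => sum_congr rfl fun h _ => ?_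
  rw [mul_mul_mul_comm, ← exp_add, sum_neg_distrib]
  push_cast
  ring_nf

lemma cardFactors_prod_of_prime {ι : Type*} [Fintype ι] {g : ι → ℕ} (hg : ∀ i, (g i).Prime) :
    ArithmeticFunction.cardFactors (∏ i, g i) = Fintype.card ι := by
  have h0 : ∏ i, g i ≠ 0 := prod_ne_zero_iff.mpr fun i _ => (hg i).ne_zero
  rw [prod_eq_multiset_prod] at h0 ⊢
  rw [ArithmeticFunction.cardFactors_multiset_prod h0]
  simp only [Multiset.map_map, Function.comp_def,
    ArithmeticFunction.cardFactors_apply_prime (hg _)]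
  simp

lemma one_div_add_one_le_log_sub_log {m n : ℕ} (hm : 0 < m) (hmn : m < n) :
    1 / (m + 1 : ℝ) ≤ Real.log n - Real.log m := by
  have hm' : (0 : ℝ) < m := by exact_mod_cast hm
  have hmn' : (m : ℝ) + 1 ≤ n := by exact_mod_cast hmn
  have hn' : (0 : ℝ) < n := by linarith
  have hlog := Real.one_sub_inv_le_log_of_pos (div_pos hn' hm')
  rw [Real.log_div hn'.ne' hm'.ne', inv_div] at hlog
  have : (m : ℝ) / n ≤ m / (m + 1) := by gcongr
  calc 1 / (m + 1 : ℝ) = 1 - m / (m + 1) := by field_simp; ring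
    _ ≤ _ := by linarith

lemma one_le_two_mul_mul_abs_log_sub_log {m n : ℕ} (hm : 0 < m) (hn : 0 < n) (hmn : m ≠ n) :
    1 ≤ 2 * m * |Real.log m - Real.log n| := by
  obtain ⟨k, hk, hgap⟩ :
      ∃ k : ℕ, k + 1 ≤ 2 * m ∧ 1 / (k + 1 : ℝ) ≤ |Real.log m - Real.log n| := by
    rcases hmn.lt_or_gt with h | h
    · refine ⟨m, by omega, (one_div_add_one_le_log_sub_log hm h).trans ?_⟩
      rw [abs_sub_comm]
      exact le_abs_self _
    · exact ⟨n, by omega, (one_div_add_one_le_log_sub_log hn h).trans (le_abs_self _)⟩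
  have hk' : (k : ℝ) + 1 ≤ 2 * m := by exact_mod_cast hk
  calc (1 : ℝ) = (k + 1) * (1 / (k + 1)) := by field_simp
    _ ≤ 2 * m * |Real.log m - Real.log n| := by gcongr

lemma one_le_two_mul_prod_mul_abs_sum_log_sub_sum_log {ι κ : Type*} [Fintype ι] [Fintype κ]
    (hcard : Fintype.card ι ≠ Fintype.card κ) {g : ι → ℕ} {h : κ → ℕ}
    (hg : ∀ i, (g i).Prime) (hh : ∀ j, (h j).Prime) :
    1 ≤ 2 * (∏ i, (g i : ℝ)) * |∑ i, Real.log (g i) - ∑ j, Real.log (h j)| := by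
  have hne : ∏ i, g i ≠ ∏ j, h j := fun e => hcard <| by
    rw [← cardFactors_prod_of_prime hg, e, cardFactors_prod_of_prime hh]
  rw [← Real.log_prod fun i _ => by exact_mod_cast (hg i).ne_zero,
    ← Real.log_prod fun j _ => by exact_mod_cast (hh j).ne_zero]
  exact_mod_cast one_le_two_mul_mul_abs_log_sub_log
    (prod_pos fun i _ => (hg i).pos) (prod_pos fun j _ => (hh j).pos) hne

lemma norm_prod_mul_prod_conj_mul_le {ι κ : Type*} [Fintype ι] [Fintype κ] {A : ℝ} (hA : 0 ≤ A)
    {b : ℕ → ℂ} (hb : ∀ p, ‖b p‖ ≤ A / √p) (g : ι → ℕ) (h : κ → ℕ) :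
    ‖(∏ i, b (g i)) * ∏ j, conj (b (h j))‖ * (2 * (2 * ∏ i, (g i : ℝ))) ≤
      4 * ((∏ i, A * √(g i)) * ∏ j, A * (1 / √(h j))) := by
  have hg : ∏ i, ‖b (g i)‖ * g i ≤ ∏ i, A * √(g i) := by
    refine prod_le_prod (fun i _ => by positivity) fun i _ => ?_
    calc ‖b (g i)‖ * g i ≤ A / √(g i) * g i := by gcongr; exact hb _
      _ = A * √(g i) := by rw [div_mul_eq_mul_div, mul_div_assoc, Real.div_sqrt]
  have hh : ∏ j, ‖b (h j)‖ ≤ ∏ j, A * (1 / √(h j)) :=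
    prod_le_prod (fun j _ => by positivity) fun j _ => by rw [mul_one_div]; exact hb _
  rw [norm_mul, norm_prod, norm_prod]
  simp only [Complex.norm_conj]
  calc _ = 4 * ((∏ i, ‖b (g i)‖ * g i) * ∏ j, ‖b (h j)‖) := by rw [prod_mul_distrib]; ring
    _ ≤ _ := by gcongr

lemma sum_prod_mul_prod_piFinset_product {κ R : Type*} [CommSemiring R] (s : Finset κ)
    (f g : κ → R) (n m : ℕ) :
    ∑ x ∈ (Fintype.piFinset fun _ : Fin n => s) ×ˢ (Fintype.piFinset fun _ : Fin m => s),
      (∏ i, f (x.1 i)) * ∏ j, g (x.2 j) = (∑ p ∈ s, f p) ^ n * (∑ p ∈ s, g p) ^ m := by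
  rw [sum_product, sum_pow', sum_pow', sum_mul_sum]

theorem off_diagonal_bound_general (X : ℕ) (a : ℕ → ℝ) (A T H : ℝ) (ν μ : ℕ)
    (hA : ∀ p, |a p| ≤ A)
    (hνμ : ν ≠ μ)
    (V : ℝ → ℂ)
    (hV : ∀ t, V t = ∑ p ∈ (Finset.Iic X).filter Nat.Prime,
        (a p : ℂ) / Real.sqrt p * Complex.exp (Complex.I * t * Real.log p)) :
    ‖∫ t in T..(T + H), V t ^ ν * (starRingEnd ℂ) (V t) ^ μ‖ ≤
      4 * A ^ (ν + μ) *
        ((∑ p ∈ (Finset.Iic X).filter Nat.Prime, Real.sqrt p) ^ ν *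
           (∑ p ∈ (Finset.Iic X).filter Nat.Prime, 1 / Real.sqrt p) ^ μ +
         (∑ p ∈ (Finset.Iic X).filter Nat.Prime, Real.sqrt p) ^ μ *
           (∑ p ∈ (Finset.Iic X).filter Nat.Prime, 1 / Real.sqrt p) ^ ν) := by
  set P := (Finset.Iic X).filter Nat.Prime
  have hA0 : 0 ≤ A := (abs_nonneg _).trans (hA 0)
  have hb (p : ℕ) : ‖(a p : ℂ) / (√p : ℝ)‖ ≤ A / √p := by
    rw [norm_div, norm_real, norm_real, Real.norm_eq_abs, Real.norm_of_nonneg (Real.sqrt_nonneg _)]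
    gcongr; exact hA p
  have hprime {k : ℕ} {g : Fin k → ℕ} (hg : g ∈ Fintype.piFinset fun _ => P) (i : Fin k) :
      (g i).Prime := (mem_filter.mp (Fintype.mem_piFinset.mp hg i)).2
  simp_rw [hV, pow_mul_conj_pow_sum_cexp]
  calc _ ≤ ∑ gh ∈ (Fintype.piFinset fun _ : Fin ν => P) ×ˢ (Fintype.piFinset fun _ : Fin μ => P),
        4 * ((∏ i, A * √(gh.1 i)) * ∏ j, A * (1 / √(gh.2 j))) := by
        refine (norm_integral_sum_cexp_le _ _ _ _ (fun gh hgh => ?_) _ _).trans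
          (sum_le_sum fun gh _ => norm_prod_mul_prod_conj_mul_le hA0 hb gh.1 gh.2)
        obtain ⟨hg, hh⟩ := mem_product.mp hgh
        simpa [mul_assoc] using one_le_two_mul_prod_mul_abs_sum_log_sub_sum_log
          (by simpa using hνμ) (hprime hg) (hprime hh)
    _ = 4 * A ^ (ν + μ) * ((∑ p ∈ P, √p) ^ ν * (∑ p ∈ P, 1 / √p) ^ μ) := by
        rw [← mul_sum,
          sum_prod_mul_prod_piFinset_product P (fun p => A * √p) (fun p => A * (1 / √p)),
          ← mul_sum, ← mul_sum]
        ring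
    _ ≤ _ := by gcongr; exact le_add_of_nonneg_right (by positivity)

theorem off_diagonal_bound (X : ℕ) (a : ℕ → ℝ) (A T H : ℝ) (ν μ : ℕ)
    (hA : ∀ p, |a p| ≤ A)
    (hsupp : ∀ p, ¬(Nat.Prime p ∧ p ≤ X) → a p = 0)
    (hH : 0 < H) (hνμ : ν ≠ μ)
    (V : ℝ → ℂ)
    (hV : ∀ t, V t = ∑ p ∈ (Finset.Iic X).filter Nat.Prime,
        (a p : ℂ) / Real.sqrt p * Complex.exp (Complex.I * t * Real.log p)) :
    ‖∫ t in T..(T + H), V t ^ ν * (starRingEnd ℂ) (V t) ^ μ‖ ≤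
      4 * A ^ (ν + μ) *
        ((∑ p ∈ (Finset.Iic X).filter Nat.Prime, Real.sqrt p) ^ ν *
           (∑ p ∈ (Finset.Iic X).filter Nat.Prime, 1 / Real.sqrt p) ^ μ +
         (∑ p ∈ (Finset.Iic X).filter Nat.Prime, Real.sqrt p) ^ μ *
           (∑ p ∈ (Finset.Iic X).filter Nat.Prime, 1 / Real.sqrt p) ^ ν) :=
  off_diagonal_bound_general X a A T H ν μ hA hνμ V hV
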